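/- arXiv:1808.02530 — 4 statements merged into one kernel-verified Lean document; each statement's English description precedes it below -/
import Mathlib

section
/- Let A ∈ ℝ^{m×n}, let M ∈ ℝ^{n×n} be symmetric positive semidefinite, let S_1, …, S_N be sketch matrices (S_i ∈ ℝ^{n×p_i}) with probabilities P_1, …, P_N ≥ 0 summing to 1, and let Z = Σ_{i=1}^N P_i Z_{S_i}. If Z is positive definite on ker(A), i.e. u^T Z u > 0 for every nonzero u ∈ ker(A), then ker(Z) = range(A^T), and consequently Z†Z is the orthogonal projection matrix onto ker(A). -/
open Matrix

-- The Moore–Penrose pseudoinverse of a real matrix, defined via the four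
-- Penrose conditions (which have a unique solution for every real matrix).
open Classical in
noncomputable def mpinv {k l : Type*} [Fintype k] [Fintype l] (B : Matrix k l ℝ) :
    Matrix l k ℝ :=
  if h : ∃ X : Matrix l k ℝ,
      B * X * B = B ∧ X * B * X = X ∧ (B * X)ᵀ = B * X ∧ (X * B)ᵀ = X * B
  then h.choose else 0

def IsPenrose {k l : Type*} [Fintype k] [Fintype l] (B : Matrix k l ℝ) (X : Matrix l k ℝ) : Prop :=
  B * X * B = B ∧ X * B * X = X ∧ (B * X)ᵀ = B * X ∧ (X * B)ᵀ = X * B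

lemma penrose_mul_left_eq {k l : Type*} [Fintype k] [Fintype l] {B : Matrix k l ℝ}
    {X Y : Matrix l k ℝ} (hX1 : B * X * B = B) (hY1 : B * Y * B = B)
    (hX3 : (B * X)ᵀ = B * X) (hY3 : (B * Y)ᵀ = B * Y) : B * X = B * Y := by
  have e1 : B * X = (B * Y) * (B * X) := by rw [← Matrix.mul_assoc, hY1]
  have e2 : (B * Y) * (B * X) = ((B * X) * (B * Y))ᵀ := by
    rw [transpose_mul, hX3, hY3]
  have e3 : (B * X) * (B * Y) = B * Y := by rw [← Matrix.mul_assoc, hX1]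
  rw [e1, e2, e3, hY3]

lemma penrose_unique {k l : Type*} [Fintype k] [Fintype l] {B : Matrix k l ℝ}
    {X Y : Matrix l k ℝ} (hX : IsPenrose B X) (hY : IsPenrose B Y) : X = Y := by
  obtain ⟨hX1, hX2, hX3, hX4⟩ := hX
  obtain ⟨hY1, hY2, hY3, hY4⟩ := hY
  have h1 : B * X = B * Y := penrose_mul_left_eq hX1 hY1 hX3 hY3
  have h2 : X * B = Y * B := by
    have tX1 : Bᵀ * Xᵀ * Bᵀ = Bᵀ := by
      rw [← transpose_mul, ← transpose_mul, ← Matrix.mul_assoc, hX1]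
    have tY1 : Bᵀ * Yᵀ * Bᵀ = Bᵀ := by
      rw [← transpose_mul, ← transpose_mul, ← Matrix.mul_assoc, hY1]
    have tX3 : (Bᵀ * Xᵀ)ᵀ = Bᵀ * Xᵀ := by
      rw [← transpose_mul, transpose_transpose, hX4]
    have tY3 : (Bᵀ * Yᵀ)ᵀ = Bᵀ * Yᵀ := by
      rw [← transpose_mul, transpose_transpose, hY4]
    have := penrose_mul_left_eq tX1 tY1 tX3 tY3
    have := congrArg transpose this
    simpa [transpose_mul] using this
  calc X = X * B * X := hX2.symm
  _ = Y * B * X := by rw [h2]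
  _ = Y * B * Y := by rw [Matrix.mul_assoc, Matrix.mul_assoc, h1]
  _ = Y := hY2

lemma exists_penrose_symm {k : Type*} [Fintype k] [DecidableEq k]
    {G : Matrix k k ℝ} (hG : G.IsHermitian) :
    ∃ X : Matrix k k ℝ, IsPenrose G X ∧ Xᵀ = X := by
  classical
  set U : Matrix k k ℝ := (Matrix.IsHermitian.eigenvectorUnitary hG : Matrix k k ℝ) with hUdef
  have hU1 : ∀ C : Matrix k k ℝ, star U * (U * C) = C := by
    intro C
    rw [← Matrix.mul_assoc,
      (Matrix.mem_unitaryGroup_iff').mp (Matrix.IsHermitian.eigenvectorUnitary hG).2, one_mul]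
  set d : k → ℝ := hG.eigenvalues with hd
  have hspec : G = U * diagonal d * star U := by
    have := hG.spectral_theorem
    rwa [RCLike.ofReal_real_eq_id, Function.id_comp] at this
  have hstar : star U = Uᵀ := by
    rw [Matrix.star_eq_conjTranspose, conjTranspose_eq_transpose_of_trivial]
  have key : ∀ D E : Matrix k k ℝ,
      (U * D * star U) * (U * E * star U) = U * (D * E) * star U := by
    intro D E
    calc (U * D * star U) * (U * E * star U)
        = U * (D * (star U * (U * (E * star U)))) := by
          simp only [Matrix.mul_assoc]
    _ = U * (D * (E * star U)) := by rw [hU1]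
    _ = U * (D * E) * star U := by simp only [Matrix.mul_assoc]
  have keyT : ∀ e : k → ℝ, (U * diagonal e * star U)ᵀ = U * diagonal e * star U := by
    intro e
    rw [hstar, transpose_mul, transpose_mul, transpose_transpose, diagonal_transpose,
      Matrix.mul_assoc]
  have hddd : (fun i => d i * (d i)⁻¹ * d i) = d := by
    funext i
    by_cases h : d i = 0
    · simp [h]
    · rw [mul_inv_cancel₀ h, one_mul]
  have hdidid : (fun i => (d i)⁻¹ * d i * (d i)⁻¹) = fun i => (d i)⁻¹ := by
    funext i
    by_cases h : d i = 0
    · simp [h]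
    · rw [inv_mul_cancel₀ h, one_mul]
  refine ⟨U * diagonal (fun i => (d i)⁻¹) * star U, ⟨?_, ?_, ?_, ?_⟩, keyT _⟩
  · rw [hspec, key, key, diagonal_mul_diagonal, diagonal_mul_diagonal]
    congr 2
    exact congrArg diagonal hddd
  · rw [hspec, key, key, diagonal_mul_diagonal, diagonal_mul_diagonal]
    congr 2
    exact congrArg diagonal hdidid
  · rw [hspec, key, diagonal_mul_diagonal, keyT]
  · rw [hspec, key, diagonal_mul_diagonal, keyT]

lemma exists_penrose {k l : Type*} [Fintype k] [Fintype l] [DecidableEq k] [DecidableEq l]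
    (B : Matrix k l ℝ) : ∃ X : Matrix l k ℝ, IsPenrose B X := by
  have hG : (Bᵀ * B).IsHermitian := by
    rw [Matrix.IsHermitian, conjTranspose_eq_transpose_of_trivial, transpose_mul,
      transpose_transpose]
  obtain ⟨Gp, ⟨hg1, hg2, hg3, hg4⟩, hgs⟩ := exists_penrose_symm hG
  set G := Bᵀ * B with hGdef
  have hGsym : Gᵀ = G := by
    rw [← conjTranspose_eq_transpose_of_trivial]; exact hG
  have fBB1 : ∀ C : Matrix l l ℝ, Bᵀ * (B * C) = G * C := by
    intro C; rw [← Matrix.mul_assoc, ← hGdef]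
  have fBB2 : ∀ C : Matrix l k ℝ, Bᵀ * (B * C) = G * C := by
    intro C; rw [← Matrix.mul_assoc, ← hGdef]
  have hA : G * (Gp * G) = G := by rw [← Matrix.mul_assoc, hg1]
  have hB' : ∀ C : Matrix l k ℝ, Gp * (G * (Gp * C)) = Gp * C := by
    intro C; simp only [← Matrix.mul_assoc, hg2]
  have key : B * (Gp * G) = B := by
    have hzero : (B * (Gp * G) - B)ᵀ * (B * (Gp * G) - B) = 0 := by
      have h1 : (B * (Gp * G) - B)ᵀ = (Gp * G) * Bᵀ - Bᵀ := by
        rw [transpose_sub, transpose_mul, hg4]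
      rw [h1, Matrix.sub_mul, Matrix.mul_sub, Matrix.mul_sub]
      simp only [Matrix.mul_assoc, fBB1, ← hGdef, hA]
      abel
    have hzero' : (B * (Gp * G) - B)ᴴ * (B * (Gp * G) - B) = 0 := by
      rwa [conjTranspose_eq_transpose_of_trivial]
    have := Matrix.conjTranspose_mul_self_eq_zero.mp hzero'
    exact sub_eq_zero.mp this
  have hcomm : G * Gp = Gp * G := by
    calc G * Gp = (G * Gp)ᵀ := hg3.symm
    _ = Gpᵀ * Gᵀ := transpose_mul _ _
    _ = Gp * G := by rw [hgs, hGsym]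
  refine ⟨Gp * Bᵀ, ?_, ?_, ?_, ?_⟩
  · -- B * (Gp * Bᵀ) * B = B
    simp only [Matrix.mul_assoc, ← hGdef]
    exact key
  · -- (Gp * Bᵀ) * B * (Gp * Bᵀ) = Gp * Bᵀ
    simp only [Matrix.mul_assoc, fBB2, hB']
  · rw [transpose_mul, transpose_mul, transpose_transpose, hgs, Matrix.mul_assoc]
  · have hstep : ((Gp * Bᵀ) * B)ᵀ = Bᵀ * (B * Gp) := by
      rw [transpose_mul, transpose_mul, transpose_transpose, hgs]
    rw [hstep, fBB1 Gp, hcomm, hGdef, ← Matrix.mul_assoc]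

lemma mpinv_isPenrose {k l : Type*} [Fintype k] [Fintype l] [DecidableEq k] [DecidableEq l]
    (B : Matrix k l ℝ) : IsPenrose B (mpinv B) := by
  have hex : ∃ X : Matrix l k ℝ,
      B * X * B = B ∧ X * B * X = X ∧ (B * X)ᵀ = B * X ∧ (X * B)ᵀ = X * B :=
    exists_penrose B
  rw [mpinv, dif_pos hex]
  exact hex.choose_spec

lemma mpinv_symm {k : Type*} [Fintype k] [DecidableEq k] {G : Matrix k k ℝ}
    (hG : Gᵀ = G) : (mpinv G)ᵀ = mpinv G := by
  obtain ⟨h1, h2, h3, h4⟩ := mpinv_isPenrose G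
  set X := mpinv G with hX
  have ha : (G * X * G)ᵀ = G * Xᵀ * G := by
    rw [transpose_mul, transpose_mul, hG, ← Matrix.mul_assoc]
  have hb : (X * G * X)ᵀ = Xᵀ * G * Xᵀ := by
    rw [transpose_mul, transpose_mul, hG, ← Matrix.mul_assoc]
  refine penrose_unique (B := G) ⟨?_, ?_, ?_, ?_⟩ ⟨h1, h2, h3, h4⟩
  · rw [← ha, h1, hG]
  · rw [← hb, h2]
  · rw [transpose_mul, transpose_transpose, hG]
    conv_rhs => rw [← hG]
    rw [← transpose_mul, h4]
  · rw [transpose_mul, transpose_transpose, hG]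
    conv_rhs => rw [← hG]
    rw [← transpose_mul, h3]

lemma mpinv_left_factor {k l : Type*} [Fintype k] [Fintype l] [DecidableEq k] [DecidableEq l]
    (B : Matrix k l ℝ) : mpinv B = Bᵀ * ((mpinv B)ᵀ * mpinv B) := by
  obtain ⟨h1, h2, h3, h4⟩ := mpinv_isPenrose B
  calc mpinv B = mpinv B * B * mpinv B := h2.symm
  _ = (mpinv B * B)ᵀ * mpinv B := by rw [h4]
  _ = Bᵀ * ((mpinv B)ᵀ * mpinv B) := by rw [transpose_mul, Matrix.mul_assoc]

/-- `P_S = I - (AS)†(AS)`, the orthogonal projection onto `ker(AS)`. -/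
noncomputable def Pmat {m n p : ℕ} (A : Matrix (Fin m) (Fin n) ℝ)
    (S : Matrix (Fin n) (Fin p) ℝ) : Matrix (Fin p) (Fin p) ℝ :=
  1 - mpinv (A * S) * (A * S)

/-- `Z_S = S P_S (P_Sᵀ Sᵀ M S P_S)† P_Sᵀ Sᵀ`. -/
noncomputable def Zmat {m n p : ℕ} (A : Matrix (Fin m) (Fin n) ℝ)
    (M : Matrix (Fin n) (Fin n) ℝ) (S : Matrix (Fin n) (Fin p) ℝ) :
    Matrix (Fin n) (Fin n) ℝ :=
  S * Pmat A S * mpinv ((Pmat A S)ᵀ * Sᵀ * M * S * Pmat A S) * (Pmat A S)ᵀ * Sᵀ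

/-- The gradient of `f : ℝ^n → ℝ`, as a vector of partial derivatives. -/
noncomputable def gradv {n : ℕ} (f : (Fin n → ℝ) → ℝ) (x : Fin n → ℝ) : Fin n → ℝ :=
  fun i => fderiv ℝ f x (Pi.single i 1)

/-- if `Z = Σ P_i Z_{S_i}` is positive definite on `ker(A)`, then
`ker(Z) = range(Aᵀ)`, and `Z†Z` is the orthogonal projection onto `ker(A)`
(i.e. for every `u`, `Z†Z u ∈ ker(A)` and `u − Z†Z u ∈ range(Aᵀ) = ker(A)ᗮ`). -/
theorem stmt3 {m n N : ℕ} (A : Matrix (Fin m) (Fin n) ℝ)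
    (M : Matrix (Fin n) (Fin n) ℝ) (hM : M.PosSemidef)
    (p : Fin N → ℕ) (S : ∀ i : Fin N, Matrix (Fin n) (Fin (p i)) ℝ)
    (P : Fin N → ℝ) (hP : ∀ i, 0 ≤ P i) (hPsum : ∑ i, P i = 1)
    (Z : Matrix (Fin n) (Fin n) ℝ) (hZ : Z = ∑ i, P i • Zmat A M (S i))
    (hpd : ∀ u : Fin n → ℝ, A.mulVec u = 0 → u ≠ 0 → 0 < u ⬝ᵥ Z.mulVec u) :
    (∀ u : Fin n → ℝ, Z.mulVec u = 0 ↔ ∃ y : Fin m → ℝ, Aᵀ.mulVec y = u) ∧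
      ∀ u : Fin n → ℝ,
        A.mulVec ((mpinv Z * Z).mulVec u) = 0 ∧
          ∃ y : Fin m → ℝ, Aᵀ.mulVec y = u - (mpinv Z * Z).mulVec u := by
  classical
  have hMt : Mᵀ = M := by
    rw [← conjTranspose_eq_transpose_of_trivial]; exact hM.1
  -- each Zmat kills Aᵀ
  have hZmatAt : ∀ i : Fin N, Zmat A M (S i) * Aᵀ = 0 := by
    intro i
    have hASP : A * S i * Pmat A (S i) = 0 := by
      unfold Pmat
      rw [Matrix.mul_sub, Matrix.mul_one, ← Matrix.mul_assoc,
        (mpinv_isPenrose (A * S i)).1, sub_self]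
    have h0 : (Pmat A (S i))ᵀ * ((S i)ᵀ * Aᵀ) = 0 := by
      have := congrArg transpose hASP
      rwa [transpose_mul, transpose_mul, transpose_zero] at this
    show S i * Pmat A (S i) *
        mpinv ((Pmat A (S i))ᵀ * (S i)ᵀ * M * S i * Pmat A (S i)) *
        (Pmat A (S i))ᵀ * (S i)ᵀ * Aᵀ = 0
    simp only [Matrix.mul_assoc]
    rw [h0, Matrix.mul_zero, Matrix.mul_zero, Matrix.mul_zero]
  have hZAt : Z * Aᵀ = 0 := by
    rw [hZ, Matrix.sum_mul]
    refine Finset.sum_eq_zero fun i _ => ?_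
    rw [Matrix.smul_mul, hZmatAt i, smul_zero]
  -- Z is symmetric
  have hZt : Zᵀ = Z := by
    rw [hZ, Matrix.transpose_sum]
    refine Finset.sum_congr rfl fun i _ => ?_
    rw [transpose_smul]
    congr 1
    have hW : ((Pmat A (S i))ᵀ * (S i)ᵀ * M * S i * Pmat A (S i))ᵀ =
        (Pmat A (S i))ᵀ * (S i)ᵀ * M * S i * Pmat A (S i) := by
      simp only [transpose_mul, transpose_transpose, hMt, Matrix.mul_assoc]
    show (S i * Pmat A (S i) *
        mpinv ((Pmat A (S i))ᵀ * (S i)ᵀ * M * S i * Pmat A (S i)) *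
        (Pmat A (S i))ᵀ * (S i)ᵀ)ᵀ =
      S i * Pmat A (S i) *
        mpinv ((Pmat A (S i))ᵀ * (S i)ᵀ * M * S i * Pmat A (S i)) *
        (Pmat A (S i))ᵀ * (S i)ᵀ
    set Q := mpinv ((Pmat A (S i))ᵀ * (S i)ᵀ * M * S i * Pmat A (S i)) with hQ
    have hQt : Qᵀ = Q := mpinv_symm hW
    simp only [transpose_mul, transpose_transpose, hQt, Matrix.mul_assoc]
  have hAZ : A * Z = 0 := by
    have := congrArg transpose hZAt
    rwa [transpose_mul, transpose_transpose, hZt, transpose_zero] at this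
  -- decomposition of an arbitrary vector
  have hXA : mpinv A * A = Aᵀ * ((mpinv A)ᵀ * mpinv A * A) := by
    conv_lhs => rw [mpinv_left_factor A]
    simp only [Matrix.mul_assoc]
  have hAXA : A * (mpinv A * A) = A := by
    rw [← Matrix.mul_assoc, (mpinv_isPenrose A).1]
  have key1 : ∀ u : Fin n → ℝ, Z.mulVec u = 0 ↔ ∃ y : Fin m → ℝ, Aᵀ.mulVec y = u := by
    intro u
    constructor
    · intro hu
      set w : Fin n → ℝ := (mpinv A * A).mulVec u with hwdef
      set y : Fin m → ℝ := ((mpinv A)ᵀ * mpinv A * A).mulVec u with hydef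
      have hw : Aᵀ.mulVec y = w := by
        rw [hydef, hwdef, Matrix.mulVec_mulVec, ← hXA]
      have hAw : A.mulVec (u - w) = 0 := by
        rw [Matrix.mulVec_sub, hwdef, Matrix.mulVec_mulVec, hAXA, sub_self]
      have hZw : Z.mulVec w = 0 := by
        rw [← hw, Matrix.mulVec_mulVec, hZAt, Matrix.zero_mulVec]
      have hZuw : Z.mulVec (u - w) = 0 := by
        rw [Matrix.mulVec_sub, hu, hZw, sub_self]
      have huw : u - w = 0 := by
        by_contra hne
        have hlt := hpd (u - w) hAw hne
        rw [hZuw, dotProduct_zero] at hlt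
        exact lt_irrefl 0 hlt
      exact ⟨y, by rw [hw]; exact (sub_eq_zero.mp huw).symm⟩
    · rintro ⟨y, rfl⟩
      rw [Matrix.mulVec_mulVec, hZAt, Matrix.zero_mulVec]
  refine ⟨key1, fun u => ?_⟩
  have hAY : A * mpinv Z = 0 := by
    conv_lhs => rw [mpinv_left_factor Z]
    rw [hZt, ← Matrix.mul_assoc, hAZ, Matrix.zero_mul]
  constructor
  · rw [Matrix.mulVec_mulVec, ← Matrix.mul_assoc, hAY,
      Matrix.zero_mul, Matrix.zero_mulVec]
  · apply (key1 _).mp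
    rw [Matrix.mulVec_sub, Matrix.mulVec_mulVec, ← Matrix.mul_assoc,
      (mpinv_isPenrose Z).1, sub_self]
end

section
/- (Convergence of RSD, nonconvex case.) Let A ∈ ℝ^{m×n}, b ∈ ℝ^m, x^0 with A x^0 = b, M ∈ ℝ^{n×n} symmetric positive semidefinite and positive definite on ker(A), and f : ℝ^n → ℝ differentiable with f(y) ≤ f(x) + ⟨∇f(x), y−x⟩ + ½(y−x)^T M(y−x) for all x, y ∈ x^0 + ker(A), and bounded below on x^0 + ker(A) by f̄ > −∞. Let S^0, S^1, … be i.i.d. samples from a finite distribution over sketch matrices S_1, …, S_N with probabilities P_i, such that Z = Σ_i P_i Z_{S_i} is positive definite on ker(A), and let x^{k+1} = x^k − Z_{S^k} ∇f(x^k). Then for every k ≥ 1, min_{0 ≤ l ≤ k−1} E[ (∇f(x^l)_⊥)^T Z (∇f(x^l)_⊥) ] ≤ 2 (f(x^0) − f̄)/k, where ∇f(x)_⊥ denotes the orthogonal projection of ∇f(x) onto ker(A) and the expectation is over the random samples S^0, …, S^{l−1}. -/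
/-!
A sketched step `x ↦ x - Z_S ∇f(x)` stays feasible because `A Z_S = 0`, and since `Z_S` is
symmetric with `Z_S M Z_S = Z_S`, the quadratic upper bound on `f` shows that it decreases `f` by
at least `½ ∇f(x)ᵀ Z_S ∇f(x)`. Averaging over the sketch, `E f(x^{l+1}) ≤ E f(x^l) - ½ E ‖∇f(x^l)‖_Z²`;
telescoping down to `f̄` bounds the sum of the first `k` expected decrements by `2 (f(x⁰) - f̄)`,
and the smallest of them is at most their average. Finally `‖v‖_Z = ‖v_⊥‖_Z`, because `Z`
annihilates `range Aᵀ = ker(A)^⊥` on both sides.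
-/

open Matrix

def IsPenroseInverse {k l : Type*} [Fintype k] [Fintype l] (B : Matrix k l ℝ)
    (X : Matrix l k ℝ) : Prop :=
  B * X * B = B ∧ X * B * X = X ∧ (B * X)ᵀ = B * X ∧ (X * B)ᵀ = X * B

section Hermitian

variable {q : Type*} [Fintype q] [DecidableEq q]

lemma transpose_cfc (f : ℝ → ℝ) (H : Matrix q q ℝ) : (cfc f H)ᵀ = cfc f H := by
  rw [← conjTranspose_eq_transpose_of_trivial]
  exact cfc_predicate f H

lemma cfc_mul_cfc (f g : ℝ → ℝ) (H : Matrix q q ℝ) :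
    cfc f H * cfc g H = cfc (fun x => f x * g x) H :=
  (cfc_mul f g H (H.finite_spectrum.continuousOn f) (H.finite_spectrum.continuousOn g)).symm

-- `x ↦ x⁻¹` (with `0⁻¹ = 0`) inverts `H` on its range and vanishes on its kernel.
lemma Matrix.IsHermitian.isPenroseInverse_cfc_inv {H : Matrix q q ℝ} (hH : H.IsHermitian) :
    IsPenroseInverse H (cfc (·⁻¹ : ℝ → ℝ) H) := by
  have hid : cfc (fun x : ℝ => x) H = H := cfc_id' ℝ H hH.isSelfAdjoint
  have mul_left (g : ℝ → ℝ) : H * cfc g H = cfc (fun x => x * g x) H := by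
    rw [← cfc_mul_cfc, hid]
  have mul_right (g : ℝ → ℝ) : cfc g H * H = cfc (fun x => g x * x) H := by
    rw [← cfc_mul_cfc, hid]
  refine ⟨?_, ?_, ?_, ?_⟩
  · rw [mul_left, mul_right]
    simp only [mul_inv_mul_cancel, hid]
  · rw [mul_right, cfc_mul_cfc]
    congr! 2 with x
    simpa using mul_inv_mul_cancel x⁻¹
  · rw [mul_left, transpose_cfc]
  · rw [mul_right, transpose_cfc]

end Hermitian

lemma exists_isPenroseInverse {k l : Type*} [Fintype k] [Fintype l] (B : Matrix k l ℝ) :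
    ∃ X, IsPenroseInverse B X := by
  classical
  have hBB : (Bᵀ * B).IsHermitian := by
    simpa only [conjTranspose_eq_transpose_of_trivial] using isHermitian_conjTranspose_mul_self B
  set Y := cfc (·⁻¹ : ℝ → ℝ) (Bᵀ * B)
  obtain ⟨h1, h2, -, h4⟩ : IsPenroseInverse (Bᵀ * B) Y := hBB.isPenroseInverse_cfc_inv
  have hY : Yᵀ = Y := transpose_cfc _ _
  have hBYBB : B * (Y * (Bᵀ * B)) = B := by
    set C := B * (Y * (Bᵀ * B) - 1)
    have hC : Bᵀ * C = 0 := by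
      simp only [C, Matrix.mul_sub, ← Matrix.mul_assoc] at h1 ⊢
      rw [h1, Matrix.mul_one, sub_self]
    have hCC : Cᴴ * C = 0 := by
      rw [conjTranspose_eq_transpose_of_trivial, transpose_mul, Matrix.mul_assoc, hC,
        Matrix.mul_zero]
    rw [← sub_eq_zero, ← Matrix.conjTranspose_mul_self_eq_zero.mp hCC]
    simp only [C, Matrix.mul_sub, Matrix.mul_one]
  refine ⟨Y * Bᵀ, ?_, ?_, ?_, ?_⟩
  · rw [Matrix.mul_assoc, Matrix.mul_assoc, hBYBB]
  · calc Y * Bᵀ * B * (Y * Bᵀ) = Y * (Bᵀ * B) * Y * Bᵀ := by simp only [Matrix.mul_assoc]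
      _ = Y * Bᵀ := by rw [h2]
  · simp only [transpose_mul, transpose_transpose, hY, Matrix.mul_assoc]
  · rw [Matrix.mul_assoc, h4]

lemma isPenroseInverse_mpinv {k l : Type*} [Fintype k] [Fintype l] (B : Matrix k l ℝ) :
    IsPenroseInverse B (mpinv B) := by
  unfold mpinv
  split_ifs with h
  · exact h.choose_spec
  · exact absurd (exists_isPenroseInverse B) h

namespace IsPenroseInverse

variable {k l : Type*} [Fintype k] [Fintype l] {B : Matrix k l ℝ} {X Y : Matrix l k ℝ}

lemma unique (hX : IsPenroseInverse B X) (hY : IsPenroseInverse B Y) : X = Y := by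
  obtain ⟨x1, x2, x3, x4⟩ := hX
  obtain ⟨y1, y2, y3, y4⟩ := hY
  have hBX : B * X = B * Y := calc
    B * X = (B * Y * B * X)ᵀ := by rw [y1, x3]
    _ = B * X * (B * Y) := by rw [Matrix.mul_assoc _ B X, transpose_mul, x3, y3]
    _ = B * Y := by rw [← Matrix.mul_assoc, x1]
  have hXB : X * B = Y * B := calc
    X * B = (X * (B * Y * B))ᵀ := by rw [y1, x4]
    _ = Y * B * (X * B) := by
      rw [Matrix.mul_assoc B, ← Matrix.mul_assoc, transpose_mul, x4, y4]
    _ = Y * B := by rw [Matrix.mul_assoc, ← Matrix.mul_assoc B, x1]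
  calc X = X * B * X := x2.symm
    _ = Y * B * Y := by rw [hXB, Matrix.mul_assoc, hBX, ← Matrix.mul_assoc]
    _ = Y := y2

lemma transpose (hX : IsPenroseInverse B X) : IsPenroseInverse Bᵀ Xᵀ := by
  obtain ⟨h1, h2, h3, h4⟩ := hX
  refine ⟨?_, ?_, ?_, ?_⟩
  · conv_rhs => rw [← h1]
    simp only [transpose_mul, Matrix.mul_assoc]
  · conv_rhs => rw [← h2]
    simp only [transpose_mul, Matrix.mul_assoc]
  · rw [← transpose_mul, transpose_transpose, h4]
  · rw [← transpose_mul, transpose_transpose, h3]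

end IsPenroseInverse

lemma Matrix.IsSymm.mpinv {q : Type*} [Fintype q] {W : Matrix q q ℝ} (hW : W.IsSymm) :
    (mpinv W).IsSymm := by
  have h := (isPenroseInverse_mpinv W).transpose
  rw [hW.eq] at h
  exact h.unique (isPenroseInverse_mpinv W)

section Sketch

variable {m n p : ℕ} (A : Matrix (Fin m) (Fin n) ℝ) (M : Matrix (Fin n) (Fin n) ℝ)
  (S : Matrix (Fin n) (Fin p) ℝ)

lemma mul_mul_Pmat : A * S * Pmat A S = 0 := by
  rw [Pmat, Matrix.mul_sub, Matrix.mul_one, ← Matrix.mul_assoc, (isPenroseInverse_mpinv _).1,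
    sub_self]

lemma Zmat_eq_mul_mpinv_mul :
    Zmat A M S = S * Pmat A S * mpinv ((S * Pmat A S)ᵀ * M * (S * Pmat A S)) *
      (S * Pmat A S)ᵀ := by
  simp only [Zmat, transpose_mul, Matrix.mul_assoc]

lemma mul_Zmat : A * Zmat A M S = 0 := by
  rw [Zmat_eq_mul_mpinv_mul]
  simp only [← Matrix.mul_assoc, mul_mul_Pmat, Matrix.zero_mul]

variable {M}

lemma isSymm_Zmat (hM : M.IsSymm) : (Zmat A M S).IsSymm := by
  rw [Zmat_eq_mul_mpinv_mul, IsSymm]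
  set T := S * Pmat A S
  have hG : (mpinv (Tᵀ * M * T)).IsSymm := IsSymm.mpinv <| by
    simp only [IsSymm, transpose_mul, transpose_transpose, hM.eq, Matrix.mul_assoc]
  set G := mpinv (Tᵀ * M * T)
  simp only [transpose_mul, transpose_transpose, hG.eq, Matrix.mul_assoc]

lemma Zmat_mul_mul_Zmat : Zmat A M S * M * Zmat A M S = Zmat A M S := by
  rw [Zmat_eq_mul_mpinv_mul]
  set T := S * Pmat A S
  have hG := (isPenroseInverse_mpinv (Tᵀ * M * T)).2.1
  set G := mpinv (Tᵀ * M * T)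
  conv_rhs => rw [← hG]
  simp only [Matrix.mul_assoc]

end Sketch

section QuadraticForm

variable {ι κ : Type*} [Fintype ι] {A : Matrix κ ι ℝ} {K : Matrix ι ι ℝ}

lemma mulVec_sub_mulVec_of_mul_eq_zero (hAK : A * K = 0) (x v : ι → ℝ) :
    A *ᵥ (x - K *ᵥ v) = A *ᵥ x := by
  rw [mulVec_sub, mulVec_mulVec, hAK, zero_mulVec, sub_zero]

lemma dotProduct_mulVec_mulVec_of_mul_mul (hK : K.IsSymm) {M : Matrix ι ι ℝ}
    (hKMK : K * M * K = K) (v : ι → ℝ) : K *ᵥ v ⬝ᵥ M *ᵥ (K *ᵥ v) = v ⬝ᵥ K *ᵥ v := calc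
  K *ᵥ v ⬝ᵥ M *ᵥ (K *ᵥ v) = v ᵥ* K ⬝ᵥ M *ᵥ (K *ᵥ v) := by rw [← vecMul_transpose, hK.eq]
  _ = v ⬝ᵥ (K * M * K) *ᵥ v := by
    rw [← dotProduct_mulVec, mulVec_mulVec, mulVec_mulVec, Matrix.mul_assoc]
  _ = v ⬝ᵥ K *ᵥ v := by rw [hKMK]

lemma dotProduct_mulVec_eq_of_sub_eq_transpose_mulVec [Fintype κ] (hAK : A * K = 0)
    (hK : K.IsSymm) {v w : ι → ℝ} {y : κ → ℝ} (h : Aᵀ *ᵥ y = v - w) :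
    v ⬝ᵥ K *ᵥ v = w ⬝ᵥ K *ᵥ w := by
  have hKA : K *ᵥ (Aᵀ *ᵥ y) = 0 := by
    rw [mulVec_mulVec, ← hK.eq, ← transpose_mul, hAK, transpose_zero, zero_mulVec]
  have hv : v = w + Aᵀ *ᵥ y := by rw [h]; abel
  rw [hv, mulVec_add, hKA, add_zero, add_dotProduct, dotProduct_comm (Aᵀ *ᵥ y),
    dotProduct_mulVec (K *ᵥ w), vecMul_transpose, mulVec_mulVec, hAK, zero_mulVec, zero_dotProduct,
    add_zero]

end QuadraticForm

section Descent

variable {m n : ℕ} {A : Matrix (Fin m) (Fin n) ℝ} {b : Fin m → ℝ} {M : Matrix (Fin n) (Fin n) ℝ}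
  {f : (Fin n → ℝ) → ℝ}

lemma apply_sub_mulVec_gradv_le
    (hsmooth : ∀ x y : Fin n → ℝ, A.mulVec x = b → A.mulVec y = b →
      f y ≤ f x + gradv f x ⬝ᵥ (y - x) + (1 / 2) * ((y - x) ⬝ᵥ M.mulVec (y - x)))
    {K : Matrix (Fin n) (Fin n) ℝ} (hAK : A * K = 0) (hK : K.IsSymm) (hKMK : K * M * K = K)
    {x : Fin n → ℝ} (hx : A *ᵥ x = b) :
    f (x - K *ᵥ gradv f x) ≤ f x - 1 / 2 * (gradv f x ⬝ᵥ K *ᵥ gradv f x) := by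
  have h := hsmooth x (x - K *ᵥ gradv f x) hx (by rw [mulVec_sub_mulVec_of_mul_eq_zero hAK, hx])
  rw [sub_sub_cancel_left, dotProduct_neg, mulVec_neg, neg_dotProduct, dotProduct_neg, neg_neg,
    dotProduct_mulVec_mulVec_of_mul_mul hK hKMK] at h
  linarith

lemma sum_mul_apply_sub_Zmat_mulVec_le
    (hsmooth : ∀ x y : Fin n → ℝ, A.mulVec x = b → A.mulVec y = b →
      f y ≤ f x + gradv f x ⬝ᵥ (y - x) + (1 / 2) * ((y - x) ⬝ᵥ M.mulVec (y - x)))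
    (hM : M.IsSymm) {N : ℕ} {p : Fin N → ℕ} (S : ∀ i, Matrix (Fin n) (Fin (p i)) ℝ)
    {P : Fin N → ℝ} (hP : ∀ i, 0 ≤ P i) (hP1 : ∑ i, P i = 1) {x : Fin n → ℝ} (hx : A *ᵥ x = b) :
    ∑ i, P i * f (x - Zmat A M (S i) *ᵥ gradv f x) ≤
      f x - 1 / 2 * (gradv f x ⬝ᵥ (∑ i, P i • Zmat A M (S i)) *ᵥ gradv f x) := by
  calc ∑ i, P i * f (x - Zmat A M (S i) *ᵥ gradv f x)
      ≤ ∑ i, P i * (f x - 1 / 2 * (gradv f x ⬝ᵥ Zmat A M (S i) *ᵥ gradv f x)) :=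
        Finset.sum_le_sum fun i _ => mul_le_mul_of_nonneg_left
          (apply_sub_mulVec_gradv_le hsmooth (mul_Zmat A M (S i)) (isSymm_Zmat A (S i) hM)
            (Zmat_mul_mul_Zmat A (S i)) hx) (hP i)
    _ = _ := by
      simp only [mul_sub, Finset.sum_sub_distrib, ← Finset.sum_mul, hP1, one_mul, sum_mulVec,
        dotProduct_sum, smul_mulVec, dotProduct_smul, smul_eq_mul, Finset.mul_sum]
      exact congrArg (f x - ·) (Finset.sum_congr rfl fun i _ => by ring)

end Descent

noncomputable def iidExpect {N : ℕ} (P : Fin N → ℝ) (l : ℕ) (F : (Fin l → Fin N) → ℝ) : ℝ :=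
  ∑ ω : Fin l → Fin N, (∏ j, P (ω j)) * F ω

namespace iidExpect

variable {N : ℕ} {P : Fin N → ℝ} {l : ℕ}

lemma succ (F : (Fin (l + 1) → Fin N) → ℝ) :
    iidExpect P (l + 1) F = iidExpect P l (fun ω => ∑ i, P i * F (Fin.snoc ω i)) := by
  rw [iidExpect, ← (Fin.snocEquiv fun _ => Fin N).sum_comp, Fintype.sum_prod_type,
    Finset.sum_comm, iidExpect]
  refine Finset.sum_congr rfl fun ω _ => ?_
  simp [Fin.snocEquiv, Fin.prod_univ_castSucc, Finset.mul_sum, mul_assoc, mul_left_comm]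

lemma mono (hP : ∀ i, 0 ≤ P i) {F G : (Fin l → Fin N) → ℝ} (h : ∀ ω, F ω ≤ G ω) :
    iidExpect P l F ≤ iidExpect P l G :=
  Finset.sum_le_sum fun ω _ =>
    mul_le_mul_of_nonneg_left (h ω) (Finset.prod_nonneg fun j _ => hP (ω j))

lemma const (hP1 : ∑ i, P i = 1) (c : ℝ) : iidExpect P l (fun _ => c) = c := by
  induction l with
  | zero => simp [iidExpect]
  | succ l ih => rw [succ, ← Finset.sum_mul, hP1, one_mul, ih]

lemma sub_const_mul (F G : (Fin l → Fin N) → ℝ) (c : ℝ) :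
    iidExpect P l (fun ω => F ω - c * G ω) = iidExpect P l F - c * iidExpect P l G := by
  simp only [iidExpect, mul_sub, Finset.sum_sub_distrib, Finset.mul_sum, mul_left_comm]

end iidExpect

lemma exists_lt_le_of_le_sub_half {F G : ℕ → ℝ} (h : ∀ l, F (l + 1) ≤ F l - G l / 2) {k : ℕ}
    (hk : 0 < k) : ∃ l < k, G l ≤ 2 * (F 0 - F k) / k := by
  have hsum : ∑ l ∈ Finset.range k, G l ≤ ∑ _l ∈ Finset.range k, 2 * (F 0 - F k) / k := by
    rw [Finset.sum_const, Finset.card_range, nsmul_eq_mul, mul_div_cancel₀ _ (by positivity),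
      ← Finset.sum_range_sub', Finset.mul_sum]
    exact Finset.sum_le_sum fun l _ => by linarith [h l]
  obtain ⟨l, hl, hGl⟩ := Finset.exists_le_of_sum_le (Finset.nonempty_range_iff.mpr hk.ne') hsum
  exact ⟨l, Finset.mem_range.mp hl, hGl⟩

def IsRSDIterates {m n N : ℕ} (A : Matrix (Fin m) (Fin n) ℝ) (M : Matrix (Fin n) (Fin n) ℝ)
    {p : Fin N → ℕ} (S : ∀ i : Fin N, Matrix (Fin n) (Fin (p i)) ℝ) (f : (Fin n → ℝ) → ℝ)
    (x0 : Fin n → ℝ) (X : ∀ k : ℕ, (Fin k → Fin N) → (Fin n → ℝ)) : Prop :=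
  (∀ ω : Fin 0 → Fin N, X 0 ω = x0) ∧
    ∀ (k : ℕ) (ω : Fin (k + 1) → Fin N),
      X (k + 1) ω = X k (fun j => ω j.castSucc) -
        (Zmat A M (S (ω (Fin.last k)))).mulVec (gradv f (X k (fun j => ω j.castSucc)))

namespace IsRSDIterates

variable {m n N : ℕ} {A : Matrix (Fin m) (Fin n) ℝ} {b : Fin m → ℝ}
  {M : Matrix (Fin n) (Fin n) ℝ} {p : Fin N → ℕ} {S : ∀ i : Fin N, Matrix (Fin n) (Fin (p i)) ℝ}
  {f : (Fin n → ℝ) → ℝ} {x0 : Fin n → ℝ} {X : ∀ k : ℕ, (Fin k → Fin N) → (Fin n → ℝ)}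

lemma snoc (hX : IsRSDIterates A M S f x0 X) {l : ℕ} (ω : Fin l → Fin N) (i : Fin N) :
    X (l + 1) (Fin.snoc ω i) = X l ω - Zmat A M (S i) *ᵥ gradv f (X l ω) := by
  rw [hX.2, Fin.snoc_last]
  simp only [Fin.snoc_castSucc]

lemma mulVec_eq (hX : IsRSDIterates A M S f x0 X) (hx0 : A *ᵥ x0 = b) {l : ℕ}
    (ω : Fin l → Fin N) : A *ᵥ X l ω = b := by
  induction l with
  | zero => rw [hX.1, hx0]
  | succ l ih =>
    rw [← Fin.snoc_init_self ω, hX.snoc, mulVec_sub_mulVec_of_mul_eq_zero (mul_Zmat A M _), ih]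

lemma iidExpect_succ_le (hX : IsRSDIterates A M S f x0 X) (hx0 : A *ᵥ x0 = b)
    (hsmooth : ∀ x y : Fin n → ℝ, A.mulVec x = b → A.mulVec y = b →
      f y ≤ f x + gradv f x ⬝ᵥ (y - x) + (1 / 2) * ((y - x) ⬝ᵥ M.mulVec (y - x)))
    (hM : M.IsSymm) {P : Fin N → ℝ} (hP : ∀ i, 0 ≤ P i) (hP1 : ∑ i, P i = 1) (l : ℕ) :
    iidExpect P (l + 1) (fun ω => f (X (l + 1) ω)) ≤
      iidExpect P l (fun ω => f (X l ω)) - iidExpect P l (fun ω =>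
        gradv f (X l ω) ⬝ᵥ (∑ i, P i • Zmat A M (S i)) *ᵥ gradv f (X l ω)) / 2 := calc
  _ = iidExpect P l (fun ω => ∑ i, P i * f (X (l + 1) (Fin.snoc ω i))) := iidExpect.succ _
  _ ≤ iidExpect P l (fun ω => f (X l ω) -
        1 / 2 * (gradv f (X l ω) ⬝ᵥ (∑ i, P i • Zmat A M (S i)) *ᵥ gradv f (X l ω))) :=
    iidExpect.mono hP fun ω => by
      simpa only [hX.snoc] using
        sum_mul_apply_sub_Zmat_mulVec_le hsmooth hM S hP hP1 (hX.mulVec_eq hx0 ω)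
  _ = _ := by rw [iidExpect.sub_const_mul]; ring

end IsRSDIterates

theorem stmt8_general {m n N : ℕ} (A : Matrix (Fin m) (Fin n) ℝ) (b : Fin m → ℝ)
    (x0 : Fin n → ℝ) (hx0 : A.mulVec x0 = b)
    (M : Matrix (Fin n) (Fin n) ℝ) (hM : M.PosSemidef)
    (f : (Fin n → ℝ) → ℝ)
    (hsmooth : ∀ x y : Fin n → ℝ, A.mulVec x = b → A.mulVec y = b →
      f y ≤ f x + gradv f x ⬝ᵥ (y - x) + (1 / 2) * ((y - x) ⬝ᵥ M.mulVec (y - x)))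
    (fbar : ℝ) (hbd : ∀ x : Fin n → ℝ, A.mulVec x = b → fbar ≤ f x)
    (p : Fin N → ℕ) (S : ∀ i : Fin N, Matrix (Fin n) (Fin (p i)) ℝ)
    (P : Fin N → ℝ) (hP : ∀ i, 0 ≤ P i) (hPsum : ∑ i, P i = 1)
    (Z : Matrix (Fin n) (Fin n) ℝ) (hZ : Z = ∑ i, P i • Zmat A M (S i))
    -- the RSD iterates, indexed by the history of i.i.d. sketch samples
    (X : ∀ k : ℕ, (Fin k → Fin N) → (Fin n → ℝ))
    (hX0 : ∀ ω : Fin 0 → Fin N, X 0 ω = x0)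
    (hXstep : ∀ (k : ℕ) (ω : Fin (k + 1) → Fin N),
      X (k + 1) ω = X k (fun j => ω j.castSucc) -
        (Zmat A M (S (ω (Fin.last k)))).mulVec (gradv f (X k (fun j => ω j.castSucc))))
    -- `proj v` is the orthogonal projection of `v` onto `ker(A)`
    (proj : (Fin n → ℝ) → (Fin n → ℝ))
    (hproj : ∀ v : Fin n → ℝ, A.mulVec (proj v) = 0 ∧
      ∃ y : Fin m → ℝ, Aᵀ.mulVec y = v - proj v)
    (k : ℕ) (hk : 1 ≤ k) :
    ∃ l : ℕ, l < k ∧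
      (∑ ω : Fin l → Fin N, (∏ j, P (ω j)) *
          (proj (gradv f (X l ω)) ⬝ᵥ Z.mulVec (proj (gradv f (X l ω))))) ≤
        2 * (f x0 - fbar) / k := by
  have hMs : M.IsSymm := isHermitian_iff_isSymm.mp hM.1
  have hX : IsRSDIterates A M S f x0 X := ⟨hX0, hXstep⟩
  subst hZ
  have hAZ : A * ∑ i, P i • Zmat A M (S i) = 0 := by
    simp only [Matrix.mul_sum, Matrix.mul_smul, mul_Zmat, smul_zero, Finset.sum_const_zero]
  have hZs : (∑ i, P i • Zmat A M (S i)).IsSymm := by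
    simp only [IsSymm, transpose_sum, transpose_smul, (isSymm_Zmat A _ hMs).eq]
  set F := fun l => iidExpect P l (fun ω => f (X l ω))
  set G := fun l => iidExpect P l (fun ω =>
    gradv f (X l ω) ⬝ᵥ (∑ i, P i • Zmat A M (S i)) *ᵥ gradv f (X l ω))
  obtain ⟨l, hl, hGl⟩ := exists_lt_le_of_le_sub_half (F := F) (G := G)
    (hX.iidExpect_succ_le hx0 hsmooth hMs hP hPsum) hk
  refine ⟨l, hl, ?_⟩
  have hF0 : F 0 = f x0 := by simp [F, iidExpect, hX0]
  have hFk : fbar ≤ F k :=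
    (iidExpect.const hPsum fbar).symm.le.trans
      (iidExpect.mono hP fun ω => hbd _ (hX.mulVec_eq hx0 ω))
  calc _ = G l := Finset.sum_congr rfl fun ω _ => by
        obtain ⟨-, y, hy⟩ := hproj (gradv f (X l ω))
        rw [← dotProduct_mulVec_eq_of_sub_eq_transpose_mulVec hAZ hZs hy]
    _ ≤ _ := hGl
    _ ≤ 2 * (f x0 - fbar) / k := by rw [hF0]; gcongr

/-- sublinear convergence of RSD in the smooth (possibly nonconvex) case:
`min_{0 ≤ l ≤ k−1} E[‖∇f(x^l)_⊥‖_Z²] ≤ 2(f(x⁰) − f̄)/k`. -/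
theorem stmt8 {m n N : ℕ} (A : Matrix (Fin m) (Fin n) ℝ) (b : Fin m → ℝ)
    (x0 : Fin n → ℝ) (hx0 : A.mulVec x0 = b)
    (M : Matrix (Fin n) (Fin n) ℝ) (hM : M.PosSemidef)
    (hMpd : ∀ u : Fin n → ℝ, A.mulVec u = 0 → u ≠ 0 → 0 < u ⬝ᵥ M.mulVec u)
    (f : (Fin n → ℝ) → ℝ) (hdiff : Differentiable ℝ f)
    (hsmooth : ∀ x y : Fin n → ℝ, A.mulVec x = b → A.mulVec y = b →
      f y ≤ f x + gradv f x ⬝ᵥ (y - x) + (1 / 2) * ((y - x) ⬝ᵥ M.mulVec (y - x)))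
    (fbar : ℝ) (hbd : ∀ x : Fin n → ℝ, A.mulVec x = b → fbar ≤ f x)
    (p : Fin N → ℕ) (S : ∀ i : Fin N, Matrix (Fin n) (Fin (p i)) ℝ)
    (P : Fin N → ℝ) (hP : ∀ i, 0 ≤ P i) (hPsum : ∑ i, P i = 1)
    (Z : Matrix (Fin n) (Fin n) ℝ) (hZ : Z = ∑ i, P i • Zmat A M (S i))
    (hpd : ∀ u : Fin n → ℝ, A.mulVec u = 0 → u ≠ 0 → 0 < u ⬝ᵥ Z.mulVec u)
    -- the RSD iterates, indexed by the history of i.i.d. sketch samples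
    (X : ∀ k : ℕ, (Fin k → Fin N) → (Fin n → ℝ))
    (hX0 : ∀ ω : Fin 0 → Fin N, X 0 ω = x0)
    (hXstep : ∀ (k : ℕ) (ω : Fin (k + 1) → Fin N),
      X (k + 1) ω = X k (fun j => ω j.castSucc) -
        (Zmat A M (S (ω (Fin.last k)))).mulVec (gradv f (X k (fun j => ω j.castSucc))))
    -- `proj v` is the orthogonal projection of `v` onto `ker(A)`
    (proj : (Fin n → ℝ) → (Fin n → ℝ))
    (hproj : ∀ v : Fin n → ℝ, A.mulVec (proj v) = 0 ∧
      ∃ y : Fin m → ℝ, Aᵀ.mulVec y = v - proj v)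
    (k : ℕ) (hk : 1 ≤ k) :
    ∃ l : ℕ, l < k ∧
      (∑ ω : Fin l → Fin N, (∏ j, P (ω j)) *
          (proj (gradv f (X l ω)) ⬝ᵥ Z.mulVec (proj (gradv f (X l ω))))) ≤
        2 * (f x0 - fbar) / k :=
  stmt8_general A b x0 hx0 M hM f hsmooth fbar hbd p S P hP hPsum Z hZ X hX0 hXstep proj hproj k hk
end

section
/- (Polyak–Łojasiewicz inequality from strong convexity.) Let A ∈ ℝ^{m×n}, x^0 with A x^0 = b, and let Z ∈ ℝ^{n×n} be symmetric positive semidefinite with ker(Z) = range(A^T) and Z positive definite on ker(A). Suppose f : ℝ^n → ℝ is differentiable and satisfies f(x) ≥ f(y) + ⟨∇f(y), x−y⟩ + (σ_Z/2)(x−y)^T Z† (x−y) for all x, y ∈ x^0 + ker(A), with σ_Z > 0, and let f* = min{ f(x) : x ∈ x^0 + ker(A) }. Then for every y ∈ x^0 + ker(A), ∇f(y)^T Z ∇f(y) ≥ 2 σ_Z (f(y) − f*). -/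
/-!
Write `v = x* − y` for a minimiser `x*` on the affine subspace. Since `v ∈ ker A` is orthogonal to
`ker Z = range Aᵀ`, it lies in `range Z`, and `u = Z† v` satisfies `Z u = v`, so the strong
convexity inequality at `(x*, y)` reads `f* ≥ f y + gᵀ Z u + (σ/2) uᵀ Z u` with `g = ∇f(y)`.
Completing the square, `0 ≤ (g + σu)ᵀ Z (g + σu)` bounds `−2σ(gᵀ Z u) − σ² uᵀ Z u` by `gᵀ Z g`.
-/

open Matrix

namespace Matrix

variable {k : Type*} [Fintype k]

lemma IsSymm.mulVec_dotProduct {Z : Matrix k k ℝ} (hZ : Z.IsSymm) (a b : k → ℝ) :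
    Z *ᵥ a ⬝ᵥ b = a ⬝ᵥ Z *ᵥ b := by
  rw [dotProduct_mulVec, ← mulVec_transpose, hZ.eq, dotProduct_comm]

lemma dotProduct_transpose_mulVec_eq_zero {l : Type*} [Fintype l] {A : Matrix l k ℝ}
    {v : k → ℝ} (hv : A *ᵥ v = 0) (z : l → ℝ) : v ⬝ᵥ Aᵀ *ᵥ z = 0 := by
  rw [mulVec_transpose, dotProduct_comm, ← dotProduct_mulVec, hv, dotProduct_zero]

/-- Completing the square `0 ≤ (g + σu)ᵀ Z (g + σu)`. -/
lemma PosSemidef.neg_two_mul_dotProduct_mulVec_sub_le {Z : Matrix k k ℝ} (hZ : Z.PosSemidef)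
    (g u : k → ℝ) (σ : ℝ) :
    -(2 * σ * (g ⬝ᵥ Z *ᵥ u)) - σ ^ 2 * (u ⬝ᵥ Z *ᵥ u) ≤ g ⬝ᵥ Z *ᵥ g := by
  have hsymm : Z.IsSymm := isHermitian_iff_isSymm.mp hZ.isHermitian
  have hsq := hZ.dotProduct_mulVec_nonneg (g + σ • u)
  have hcross : u ⬝ᵥ Z *ᵥ g = g ⬝ᵥ Z *ᵥ u := by
    rw [← hsymm.mulVec_dotProduct, dotProduct_comm]
  simp only [star_trivial, mulVec_add, mulVec_smul, dotProduct_add, add_dotProduct,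
    dotProduct_smul, smul_dotProduct, smul_eq_mul, hcross] at hsq
  linarith [hsq]

variable [DecidableEq k]

/-- The functional calculus witness `Z† = cfc (·⁻¹) Z`. -/
lemma IsHermitian.exists_penrose {Z : Matrix k k ℝ} (hZ : Z.IsHermitian) :
    ∃ X : Matrix k k ℝ,
      Z * X * Z = Z ∧ X * Z * X = X ∧ (Z * X)ᵀ = Z * X ∧ (X * Z)ᵀ = X * Z := by
  have hsa : IsSelfAdjoint Z := hZ
  have hcont (f : ℝ → ℝ) : ContinuousOn f (spectrum ℝ Z) :=
    Z.finite_real_spectrum.continuousOn f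
  have hmul (f g : ℝ → ℝ) : cfc f Z * cfc g Z = cfc (fun x => f x * g x) Z :=
    (cfc_mul f g Z (hcont f) (hcont g)).symm
  have hmul_left (g : ℝ → ℝ) : Z * cfc g Z = cfc (fun x => x * g x) Z := by
    rw [← hmul, cfc_id' ℝ Z]
  have hmul_right (g : ℝ → ℝ) : cfc g Z * Z = cfc (fun x => g x * x) Z := by
    rw [← hmul, cfc_id' ℝ Z]
  have hsymm (f : ℝ → ℝ) : (cfc f Z)ᵀ = cfc f Z := by
    rw [← conjTranspose_eq_transpose_of_trivial]
    exact cfc_predicate f Z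
  refine ⟨cfc (·⁻¹ : ℝ → ℝ) Z, ?_, ?_, ?_, ?_⟩
  · rw [hmul_left, hmul_right]
    simp only [mul_inv_mul_cancel, cfc_id' ℝ Z]
  · rw [hmul_right, hmul]
    congr 1
    funext x
    simpa using mul_inv_mul_cancel x⁻¹
  · rw [hmul_left, hsymm]
  · rw [hmul_right, hsymm]

lemma IsHermitian.mpinv_penrose {Z : Matrix k k ℝ} (hZ : Z.IsHermitian) :
    Z * mpinv Z * Z = Z ∧ mpinv Z * Z * mpinv Z = mpinv Z ∧
      (Z * mpinv Z)ᵀ = Z * mpinv Z ∧ (mpinv Z * Z)ᵀ = mpinv Z * Z := by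
  rw [mpinv, dif_pos hZ.exists_penrose]
  exact hZ.exists_penrose.choose_spec

lemma IsHermitian.mulVec_mpinv_mulVec {Z : Matrix k k ℝ} (hZ : Z.IsHermitian) {v : k → ℝ}
    (hv : ∀ w, Z *ᵥ w = 0 → v ⬝ᵥ w = 0) : Z *ᵥ (mpinv Z *ᵥ v) = v := by
  have hsymm : Z.IsSymm := isHermitian_iff_isSymm.mp hZ
  obtain ⟨hZXZ, -, hZX, -⟩ := hZ.mpinv_penrose
  have hZZX : Z * Z * mpinv Z = Z := by
    calc Z * Z * mpinv Z = (Z * mpinv Z * Z)ᵀ := by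
          rw [transpose_mul, hZX, hsymm.eq, Matrix.mul_assoc]
      _ = Z := by rw [hZXZ, hsymm.eq]
  set w := v - Z *ᵥ (mpinv Z *ᵥ v)
  have hZw : Z *ᵥ w = 0 := by
    rw [mulVec_sub, mulVec_mulVec, mulVec_mulVec, hZZX, sub_self]
  have hww : w ⬝ᵥ w = 0 := by
    calc w ⬝ᵥ w = v ⬝ᵥ w - mpinv Z *ᵥ v ⬝ᵥ Z *ᵥ w := by
          rw [← hsymm.mulVec_dotProduct, ← sub_dotProduct]
      _ = 0 := by rw [hv w hZw, hZw, dotProduct_zero, sub_self]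
  exact (sub_eq_zero.mp (dotProduct_self_eq_zero.mp hww)).symm

end Matrix

theorem stmt10_general {m n : ℕ} (A : Matrix (Fin m) (Fin n) ℝ) (b : Fin m → ℝ)
    (Z : Matrix (Fin n) (Fin n) ℝ) (hZ : Z.PosSemidef)
    (hker : ∀ u : Fin n → ℝ, Z.mulVec u = 0 ↔ ∃ y : Fin m → ℝ, Aᵀ.mulVec y = u)
    (f : (Fin n → ℝ) → ℝ)
    (σZ : ℝ) (hσ : 0 < σZ)
    (hsc : ∀ x y : Fin n → ℝ, A.mulVec x = b → A.mulVec y = b →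
      f x ≥ f y + gradv f y ⬝ᵥ (x - y) +
        (σZ / 2) * ((x - y) ⬝ᵥ (mpinv Z).mulVec (x - y)))
    (fstar : ℝ)
    (hfattained : ∃ xs : Fin n → ℝ, A.mulVec xs = b ∧ f xs = fstar)
    (y : Fin n → ℝ) (hy : A.mulVec y = b) :
    gradv f y ⬝ᵥ Z.mulVec (gradv f y) ≥ 2 * σZ * (f y - fstar) := by
  obtain ⟨xs, hxs, rfl⟩ := hfattained
  have hAv : A *ᵥ (xs - y) = 0 := by rw [mulVec_sub, hxs, hy, sub_self]
  have hconv := hsc xs y hxs hy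
  have hZu : Z *ᵥ (mpinv Z *ᵥ (xs - y)) = xs - y :=
    hZ.isHermitian.mulVec_mpinv_mulVec fun w hw => by
      obtain ⟨z, rfl⟩ := (hker w).mp hw
      exact dotProduct_transpose_mulVec_eq_zero hAv z
  generalize mpinv Z *ᵥ (xs - y) = u at hconv hZu
  rw [← hZu, dotProduct_comm _ u] at hconv
  have hgap : f y - f xs ≤ -(gradv f y ⬝ᵥ Z *ᵥ u) - σZ / 2 * (u ⬝ᵥ Z *ᵥ u) := by linarith
  have hsq := hZ.neg_two_mul_dotProduct_mulVec_sub_le (gradv f y) u σZ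
  linarith [mul_le_mul_of_nonneg_left hgap (by positivity : (0 : ℝ) ≤ 2 * σZ)]

/-- strong convexity relative to `Z†` implies the
Polyak–Łojasiewicz inequality `‖∇f(y)‖_Z² ≥ 2σ_Z (f(y) − f*)`. -/
theorem stmt10 {m n : ℕ} (A : Matrix (Fin m) (Fin n) ℝ) (b : Fin m → ℝ)
    (x0 : Fin n → ℝ) (hx0 : A.mulVec x0 = b)
    (Z : Matrix (Fin n) (Fin n) ℝ) (hZ : Z.PosSemidef)
    (hker : ∀ u : Fin n → ℝ, Z.mulVec u = 0 ↔ ∃ y : Fin m → ℝ, Aᵀ.mulVec y = u)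
    (hpd : ∀ u : Fin n → ℝ, A.mulVec u = 0 → u ≠ 0 → 0 < u ⬝ᵥ Z.mulVec u)
    (f : (Fin n → ℝ) → ℝ) (hdiff : Differentiable ℝ f)
    (σZ : ℝ) (hσ : 0 < σZ)
    (hsc : ∀ x y : Fin n → ℝ, A.mulVec x = b → A.mulVec y = b →
      f x ≥ f y + gradv f y ⬝ᵥ (x - y) +
        (σZ / 2) * ((x - y) ⬝ᵥ (mpinv Z).mulVec (x - y)))
    (fstar : ℝ) (hfs : ∀ x : Fin n → ℝ, A.mulVec x = b → fstar ≤ f x)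
    (hfattained : ∃ xs : Fin n → ℝ, A.mulVec xs = b ∧ f xs = fstar)
    (y : Fin n → ℝ) (hy : A.mulVec y = b) :
    gradv f y ⬝ᵥ Z.mulVec (gradv f y) ≥ 2 * σZ * (f y - fstar) :=
  stmt10_general A b Z hZ hker f σZ hσ hsc fstar hfattained y hy
end

section
/- (Explicit sketch matrices for a single sum constraint.) Let n ≥ 2, let L_1, …, L_n > 0, L = Σ_{i=1}^n L_i, M = diag(L_1, …, L_n), A = e^T ∈ ℝ^{1×n} (e the all-ones vector), and for each pair i < j let S_{(i,j)} = [e_i e_j] ∈ ℝ^{n×2} (e_i the i-th standard basis vector) with probability P_{(i,j)} = (L_i + L_j)/((n−1) L). Then: (i) Z_{S_{(i,j)}} = (1/(L_i + L_j)) (e_i − e_j)(e_i − e_j)^T; (ii) the expectation Z = Σ_{i<j} P_{(i,j)} Z_{S_{(i,j)}} equals (n/((n−1) L)) (I_n − (1/n) e e^T); and (iii) Z† = ((n−1) L/n) (I_n − (1/n) e e^T). In particular Z is positive definite on ker(A) = {u : e^T u = 0}. -/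
open Matrix

/-!
For the pair sketch `S = [e_i e_j]` one has `A S = [1 1]`, so `P_S` is the centering projection
`C = I - ½ eeᵀ` of `ℝ²`, and `C diag(L_i, L_j) C = ((L_i + L_j) / 2) C`. The pseudoinverse of a
multiple `c Q` of a symmetric idempotent `Q` is `c⁻¹ Q`, whence
`Z_S = (2 / (L_i + L_j)) S C Sᵀ = (e_i - e_j)(e_i - e_j)ᵀ / (L_i + L_j)`.
In the expectation the probabilities cancel the factors `1 / (L_i + L_j)`, and
`∑_{i<j} (e_i - e_j)(e_i - e_j)ᵀ = n I - eeᵀ` is half of the symmetric double sum over all pairs.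
So `Z` is a multiple of the centering projection of `ℝⁿ`, whose pseudoinverse is again read off,
and which is the identity on `ker A`.
-/

theorem mpinv_eq_of_penrose {k l : Type*} [Fintype k] [Fintype l] {B : Matrix k l ℝ}
    {X : Matrix l k ℝ} (h₁ : B * X * B = B) (h₂ : X * B * X = X) (h₃ : (B * X)ᵀ = B * X)
    (h₄ : (X * B)ᵀ = X * B) : mpinv B = X := by
  have hex : ∃ X : Matrix l k ℝ,
      B * X * B = B ∧ X * B * X = X ∧ (B * X)ᵀ = B * X ∧ (X * B)ᵀ = X * B :=
    ⟨X, h₁, h₂, h₃, h₄⟩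
  rw [mpinv, dif_pos hex]
  obtain ⟨g₁, g₂, g₃, g₄⟩ := hex.choose_spec
  set Y := hex.choose
  have hBX : B * X = B * Y := by
    calc B * X = (B * Y * B) * X := by rw [g₁]
      _ = (B * Y)ᵀ * (B * X)ᵀ := by rw [g₃, h₃, Matrix.mul_assoc]
      _ = (B * X * B * Y)ᵀ := by rw [← transpose_mul, Matrix.mul_assoc (B * X)]
      _ = B * Y := by rw [h₁, g₃]
  have hXB : X * B = Y * B := by
    calc X * B = X * (B * Y * B) := by rw [g₁]
      _ = (X * B)ᵀ * (Y * B)ᵀ := by rw [h₄, g₄, Matrix.mul_assoc, Matrix.mul_assoc]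
      _ = (Y * (B * X * B))ᵀ := by rw [← transpose_mul, Matrix.mul_assoc, Matrix.mul_assoc]
      _ = Y * B := by rw [h₁, g₄]
  calc Y = Y * (B * Y) := by rw [← Matrix.mul_assoc, g₂]
    _ = X * B * X := by rw [← hBX, ← Matrix.mul_assoc, ← hXB]
    _ = X := h₂

theorem mpinv_smul_of_transpose_eq_of_mul_self_eq {k : Type*} [Fintype k] {Q : Matrix k k ℝ}
    (hQT : Qᵀ = Q) (hQQ : Q * Q = Q) (c : ℝ) : mpinv (c • Q) = c⁻¹ • Q := by
  apply mpinv_eq_of_penrose <;>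
    simp only [Matrix.smul_mul, Matrix.mul_smul, smul_smul, transpose_smul, hQT, hQQ]
  · rw [← mul_assoc, mul_inv_mul_cancel]
  · congr 1
    simpa [mul_assoc] using mul_inv_mul_cancel c⁻¹

theorem mpinv_ones {k l : Type*} [Fintype k] [Fintype l] [Nonempty k] [Nonempty l] :
    mpinv (of fun _ _ => 1 : Matrix k l ℝ) =
      (1 / (Fintype.card k * Fintype.card l : ℝ)) • of fun _ _ => 1 := by
  apply mpinv_eq_of_penrose <;> ext <;> simp [mul_apply]
  field_simp

noncomputable def centeringMatrix (p : ℕ) : Matrix (Fin p) (Fin p) ℝ :=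
  1 - (1 / (p : ℝ)) • of fun _ _ => 1

theorem ones_mul_ones {k l o : Type*} [Fintype l] :
    (of fun _ _ => 1 : Matrix k l ℝ) * (of fun _ _ => 1 : Matrix l o ℝ) =
      (Fintype.card l : ℝ) • of fun _ _ => 1 := by
  ext; simp [mul_apply]

theorem transpose_centeringMatrix (p : ℕ) : (centeringMatrix p)ᵀ = centeringMatrix p := by
  simp [centeringMatrix, ← Matrix.ext_iff, eq_comm]

theorem centeringMatrix_mul_self (p : ℕ) :
    centeringMatrix p * centeringMatrix p = centeringMatrix p := by
  rcases Nat.eq_zero_or_pos p with rfl | hp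
  · simp [centeringMatrix]
  · simp only [centeringMatrix, sub_mul, mul_sub, Matrix.mul_one, Matrix.one_mul, Matrix.smul_mul,
      Matrix.mul_smul, ones_mul_ones, Fintype.card_fin, smul_smul]
    field_simp
    abel

theorem natCast_smul_centeringMatrix (p : ℕ) [NeZero p] :
    (p : ℝ) • centeringMatrix p = (p : ℝ) • 1 - of fun _ _ => 1 := by
  rw [centeringMatrix, smul_sub, smul_smul, mul_one_div_cancel (NeZero.ne _), one_smul]

theorem centeringMatrix_mulVec_of_sum_eq_zero {p : ℕ} {u : Fin p → ℝ} (hu : ∑ i, u i = 0) :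
    centeringMatrix p *ᵥ u = u := by
  have hJu : (of fun _ _ => 1 : Matrix (Fin p) (Fin p) ℝ) *ᵥ u = 0 := by
    ext; simp [mulVec, dotProduct, hu]
  rw [centeringMatrix, sub_mulVec, one_mulVec, smul_mulVec, hJu, smul_zero, sub_zero]

theorem centeringMatrix_two :
    centeringMatrix 2 = (1 / 2 : ℝ) • vecMulVec ![1, -1] ![1, -1] := by
  ext a b
  fin_cases a <;> fin_cases b <;> norm_num [centeringMatrix, one_apply]

theorem centeringMatrix_two_mul_diagonal_mul (d : Fin 2 → ℝ) :
    centeringMatrix 2 * diagonal d * centeringMatrix 2 =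
      ((d 0 + d 1) / 2) • centeringMatrix 2 := by
  have hv : (![1, -1] ᵥ* diagonal d) ⬝ᵥ ![1, -1] = d 0 + d 1 := by
    simp [vecMul_diagonal, dotProduct, Fin.sum_univ_two]
  rw [centeringMatrix_two, Matrix.smul_mul, Matrix.smul_mul, Matrix.mul_smul, vecMulVec_mul,
    vecMulVec_mul_vecMulVec, hv, vecMulVec_smul]
  module

theorem Pmat_eq_centeringMatrix {m n p : ℕ} [NeZero m] [NeZero p] {A : Matrix (Fin m) (Fin n) ℝ}
    {S : Matrix (Fin n) (Fin p) ℝ} (hAS : A * S = of fun _ _ => 1) :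
    Pmat A S = centeringMatrix p := by
  rw [Pmat, hAS, mpinv_ones, Matrix.smul_mul, ones_mul_ones, smul_smul, centeringMatrix]
  have hm : (m : ℝ) ≠ 0 := Nat.cast_ne_zero.mpr (NeZero.ne m)
  simp only [Fintype.card_fin]
  congr 2
  field_simp

theorem Zmat_eq_of_Pmat_eq {m n p : ℕ} {A : Matrix (Fin m) (Fin n) ℝ}
    {M : Matrix (Fin n) (Fin n) ℝ} {S : Matrix (Fin n) (Fin p) ℝ}
    {Q : Matrix (Fin p) (Fin p) ℝ}
    (hP : Pmat A S = Q) (hQT : Qᵀ = Q) (hQQ : Q * Q = Q) {c : ℝ}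
    (hc : Q * (Sᵀ * M * S) * Q = c • Q) : Zmat A M S = c⁻¹ • (S * Q * Sᵀ) := by
  have hmid : Qᵀ * Sᵀ * M * S * Q = c • Q := by
    rw [hQT, ← hc]; simp only [Matrix.mul_assoc]
  rw [Zmat, hP, hmid, mpinv_smul_of_transpose_eq_of_mul_self_eq hQT hQQ, hQT]
  simp only [Matrix.mul_smul, Matrix.smul_mul, Matrix.mul_assoc, hQQ]

def pairSketch {n : ℕ} (i j : Fin n) : Matrix (Fin n) (Fin 2) ℝ :=
  of fun k l => if l = 0 then (if k = i then 1 else 0) else (if k = j then 1 else 0)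

section pairSketch

variable {n : ℕ} {i j : Fin n}

theorem ones_mul_pairSketch {m : ℕ} :
    (of fun _ _ => 1 : Matrix (Fin m) (Fin n) ℝ) * pairSketch i j = of fun _ _ => 1 := by
  ext a b
  fin_cases b <;> simp [pairSketch, mul_apply]

theorem pairSketch_transpose_mul_diagonal_mul (L : Fin n → ℝ) (hij : i ≠ j) :
    (pairSketch i j)ᵀ * diagonal L * pairSketch i j = diagonal ![L i, L j] := by
  ext a b
  fin_cases a <;> fin_cases b <;> simp [pairSketch, mul_apply, hij, hij.symm]

theorem pairSketch_mulVec : pairSketch i j *ᵥ ![1, -1] = Pi.single i 1 - Pi.single j 1 := by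
  ext k
  by_cases hi : k = i <;> by_cases hj : k = j <;>
    simp_all [pairSketch, mulVec, dotProduct, Fin.sum_univ_two]

theorem pairSketch_mul_centeringMatrix_mul_transpose :
    pairSketch i j * centeringMatrix 2 * (pairSketch i j)ᵀ =
      (1 / 2 : ℝ) •
        vecMulVec (Pi.single i 1 - Pi.single j 1) (Pi.single i 1 - Pi.single j 1) := by
  rw [centeringMatrix_two, Matrix.mul_smul, Matrix.smul_mul, mul_vecMulVec, vecMulVec_mul,
    vecMul_transpose, pairSketch_mulVec]

theorem Zmat_pairSketch (L : Fin n → ℝ) (hij : i ≠ j) :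
    Zmat (of fun _ _ => 1 : Matrix (Fin 1) (Fin n) ℝ) (diagonal L) (pairSketch i j) =
      (1 / (L i + L j)) •
        vecMulVec (Pi.single i 1 - Pi.single j 1) (Pi.single i 1 - Pi.single j 1) := by
  have hZ := Zmat_eq_of_Pmat_eq (Pmat_eq_centeringMatrix (m := 1) ones_mul_pairSketch)
    (transpose_centeringMatrix 2) (centeringMatrix_mul_self 2)
    (by rw [pairSketch_transpose_mul_diagonal_mul L hij, centeringMatrix_two_mul_diagonal_mul])
  rw [hZ, pairSketch_mul_centeringMatrix_mul_transpose, smul_smul]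
  congr 1
  simp only [Matrix.cons_val_zero, Matrix.cons_val_one, inv_div]
  ring

end pairSketch

theorem Finset.sum_univ_eq_two_nsmul_sum_filter_fst_lt_snd {ι M : Type*} [Fintype ι]
    [LinearOrder ι] [AddCommMonoid M] (f : ι × ι → M) (hsymm : ∀ i j, f (i, j) = f (j, i))
    (hdiag : ∀ i, f (i, i) = 0) :
    ∑ q, f q = 2 • ∑ q ∈ univ.filter (fun q : ι × ι => q.1 < q.2), f q := by
  have hsplit : ∀ q : ι × ι,
      f q = (if q.1 < q.2 then f q else 0) + (if q.2 < q.1 then f q else 0) := by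
    rintro ⟨i, j⟩
    rcases lt_trichotomy i j with h | rfl | h
    · simp [h, h.not_gt]
    · simp [hdiag]
    · simp [h, h.not_gt]
  have hswap : ∑ q : ι × ι, (if q.2 < q.1 then f q else 0) =
      ∑ q : ι × ι, (if q.1 < q.2 then f q else 0) :=
    Fintype.sum_equiv (Equiv.prodComm ι ι) _ _ fun ⟨i, j⟩ => by dsimp; rw [hsymm]; congr
  rw [Finset.sum_congr rfl fun q _ => hsplit q, Finset.sum_add_distrib, hswap, two_nsmul,
    Finset.sum_filter]

theorem Finset.sum_sum_sub_mul_sub {ι R : Type*} [Fintype ι] [CommRing R] (a b : ι → R) :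
    ∑ i, ∑ j, (a i - a j) * (b i - b j) =
      2 * (Fintype.card ι * ∑ i, a i * b i - (∑ i, a i) * ∑ i, b i) := by
  simp only [mul_sub, sub_mul, Finset.sum_sub_distrib, Finset.sum_const, Finset.card_univ,
    nsmul_eq_mul, ← Finset.mul_sum, ← Finset.sum_mul]
  ring

theorem sum_vecMulVec_single_sub_single {ι : Type*} [Fintype ι] [LinearOrder ι] :
    ∑ q ∈ Finset.univ.filter (fun q : ι × ι => q.1 < q.2),
        vecMulVec (Pi.single q.1 1 - Pi.single q.2 1) (Pi.single q.1 1 - Pi.single q.2 1) =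
      (Fintype.card ι : ℝ) • (1 : Matrix ι ι ℝ) - of fun _ _ => 1 := by
  ext k l
  set e : ι → ι → ℝ := fun i => Pi.single i 1
  have htwo := Finset.sum_univ_eq_two_nsmul_sum_filter_fst_lt_snd
    (fun q : ι × ι => (e q.1 k - e q.2 k) * (e q.1 l - e q.2 l)) (fun _ _ => by ring)
    (fun _ => by ring)
  rw [Fintype.sum_prod_type] at htwo
  dsimp only at htwo
  rw [Finset.sum_sum_sub_mul_sub] at htwo
  simpa [e, Matrix.sum_apply, vecMulVec_apply, one_apply, Pi.single_apply] using htwo.symm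

theorem sum_smul_Zmat_pairSketch {n : ℕ} [NeZero n] (L : Fin n → ℝ) (hL : ∀ i, 0 < L i)
    (d : ℝ) :
    ∑ q ∈ Finset.univ.filter (fun q : Fin n × Fin n => q.1 < q.2),
        ((L q.1 + L q.2) / d) •
          Zmat (of fun _ _ => 1 : Matrix (Fin 1) (Fin n) ℝ) (diagonal L) (pairSketch q.1 q.2) =
      ((n : ℝ) / d) • centeringMatrix n := by
  have hterm : ∀ q ∈ Finset.univ.filter (fun q : Fin n × Fin n => q.1 < q.2),
      ((L q.1 + L q.2) / d) •
          Zmat (of fun _ _ => 1 : Matrix (Fin 1) (Fin n) ℝ) (diagonal L) (pairSketch q.1 q.2) =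
        (1 / d) •
          vecMulVec (Pi.single q.1 1 - Pi.single q.2 1) (Pi.single q.1 1 - Pi.single q.2 1) := by
    intro q hq
    have hpos : 0 < L q.1 + L q.2 := add_pos (hL _) (hL _)
    rw [Zmat_pairSketch L (Finset.mem_filter.mp hq).2.ne, smul_smul]
    congr 1
    field_simp
  rw [Finset.sum_congr rfl hterm, ← Finset.smul_sum, sum_vecMulVec_single_sub_single,
    Fintype.card_fin, ← natCast_smul_centeringMatrix, smul_smul, one_div_mul_eq_div]

/-- explicit sketch matrices for a single sum constraint:
`Z_{S_(i,j)} = (e_i−e_j)(e_i−e_j)ᵀ/(L_i+L_j)`, `Z = (n/((n−1)L))(I − eeᵀ/n)`,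
`Z† = ((n−1)L/n)(I − eeᵀ/n)`, and `Z` is positive definite on `ker(A)`. -/
theorem stmt17 {n : ℕ} (hn : 2 ≤ n) (L : Fin n → ℝ) (hL : ∀ i, 0 < L i)
    (Ltot : ℝ) (hLtot : Ltot = ∑ i, L i)
    (A : Matrix (Fin 1) (Fin n) ℝ) (hA : A = Matrix.of fun _ _ => (1 : ℝ))
    (Mm : Matrix (Fin n) (Fin n) ℝ) (hMm : Mm = Matrix.diagonal L)
    (Sij : Fin n → Fin n → Matrix (Fin n) (Fin 2) ℝ)
    (hSij : ∀ i j : Fin n, Sij i j = Matrix.of fun k l =>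
      if l = (0 : Fin 2) then (if k = i then (1 : ℝ) else 0)
      else (if k = j then (1 : ℝ) else 0))
    (Zexp : Matrix (Fin n) (Fin n) ℝ)
    (hZexp : Zexp = ((n : ℝ) / (((n : ℝ) - 1) * Ltot)) •
      ((1 : Matrix (Fin n) (Fin n) ℝ) -
        ((1 : ℝ) / (n : ℝ)) • Matrix.of (fun _ _ => (1 : ℝ)))) :
    (∀ i j : Fin n, i < j →
        Zmat A Mm (Sij i j) = (1 / (L i + L j)) •
          Matrix.vecMulVec (Pi.single i 1 - Pi.single j 1)
            (Pi.single i 1 - Pi.single j 1)) ∧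
      (∑ q ∈ Finset.univ.filter (fun q : Fin n × Fin n => q.1 < q.2),
          ((L q.1 + L q.2) / (((n : ℝ) - 1) * Ltot)) • Zmat A Mm (Sij q.1 q.2)) = Zexp ∧
      mpinv Zexp = ((((n : ℝ) - 1) * Ltot) / (n : ℝ)) •
        ((1 : Matrix (Fin n) (Fin n) ℝ) -
          ((1 : ℝ) / (n : ℝ)) • Matrix.of (fun _ _ => (1 : ℝ))) ∧
      ∀ u : Fin n → ℝ, (∑ i, u i) = 0 → u ≠ 0 → 0 < u ⬝ᵥ Zexp.mulVec u := by
  have : NeZero n := ⟨by omega⟩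
  obtain rfl : Sij = pairSketch := funext₂ hSij
  change Zexp = _ • centeringMatrix n at hZexp
  subst hA hMm hZexp
  refine ⟨fun i j hij => Zmat_pairSketch L hij.ne, sum_smul_Zmat_pairSketch L hL _, ?_, ?_⟩
  · rw [mpinv_smul_of_transpose_eq_of_mul_self_eq (transpose_centeringMatrix n)
      (centeringMatrix_mul_self n), inv_div]
    rfl
  · intro u hu hu0
    have hLtot_pos : 0 < Ltot := hLtot ▸ Finset.sum_pos (fun i _ => hL i) Finset.univ_nonempty
    have hn₁ : (1 : ℝ) < n := by exact_mod_cast hn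
    have hcoef : 0 < (n : ℝ) / ((n - 1) * Ltot) :=
      div_pos (by linarith) (mul_pos (sub_pos.mpr hn₁) hLtot_pos)
    have huu : 0 < u ⬝ᵥ u := by simpa using dotProduct_star_self_pos_iff.mpr hu0
    rw [smul_mulVec, centeringMatrix_mulVec_of_sum_eq_zero hu, dotProduct_smul, smul_eq_mul]
    exact mul_pos hcoef huu
end
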